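/- Let M be a ℤ_p[C]-module, finitely generated as a ℤ_p-module, where C = ⟨t⟩ is infinite cyclic and I is the augmentation ideal of ℤ_p[C]. If M(t−1) ⊆ pM, then the natural map M → M̂_I to the I-adic completion is an isomorphism. -/

import Mathlib

open MonoidAlgebra

/-- The infinite cyclic group. -/
abbrev C : Type := Multiplicative ℤ

/-- The augmentation ideal `I = Ker(ℤ_p[C] → ℤ_p)`. -/
noncomputable def augIdeal (p : ℕ) [Fact p.Prime] : Ideal (MonoidAlgebra ℤ_[p] C) :=
  RingHom.ker ((MonoidAlgebra.lift ℤ_[p] ℤ_[p] C) 1).toRingHom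

/-- The generator `t` of `C` viewed inside the group ring `ℤ_p[C]`. -/
noncomputable def tElt (p : ℕ) [Fact p.Prime] : MonoidAlgebra ℤ_[p] C :=
  MonoidAlgebra.of ℤ_[p] C (Multiplicative.ofAdd (1 : ℤ))

/-!
Since `ℤ_p` is a complete Noetherian local ring and `M` is a finite `ℤ_p`-module, `M` is
`p`-adically complete and every `ℤ_p`-submodule of `M` is `p`-adically closed. The augmentation
ideal is generated by `t - 1`, so `M(t−1) ⊆ pM` gives `I ^ n M ⊆ p ^ n M`. Hence the `I`-adic
filtration is finer than the `p`-adic one: `I`-adic separatedness is inherited, an `I`-adic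
Cauchy sequence has a `p`-adic limit, and that limit is an `I`-adic limit since each
`I ^ n M` is `p`-adically closed.
-/

universe u

section AdicComparison

variable {A M : Type*} [CommRing A] [AddCommGroup M] [Module A M] {I J : Ideal A}

theorem pow_smul_top_le_pow_smul_top (h : J • ⊤ ≤ I • (⊤ : Submodule A M)) (n : ℕ) :
    J ^ n • ⊤ ≤ I ^ n • (⊤ : Submodule A M) := by
  induction n with
  | zero => simp
  | succ n ih =>
    calc J ^ (n + 1) • ⊤ = J ^ n • J • (⊤ : Submodule A M) := by rw [pow_succ, Submodule.mul_smul]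
      _ ≤ J ^ n • I • ⊤ := Submodule.smul_mono le_rfl h
      _ = I • J ^ n • ⊤ := by rw [← Submodule.mul_smul, mul_comm, Submodule.mul_smul]
      _ ≤ I • I ^ n • ⊤ := Submodule.smul_mono le_rfl ih
      _ = I ^ (n + 1) • ⊤ := by rw [← Submodule.mul_smul, pow_succ']

theorem IsHausdorff.of_smul_top_le [IsHausdorff I M] (h : J • ⊤ ≤ I • (⊤ : Submodule A M)) :
    IsHausdorff J M :=
  ⟨fun x hx ↦ IsHausdorff.haus ‹_› x fun n ↦
    SModEq.sub_mem.mpr (pow_smul_top_le_pow_smul_top h n (SModEq.sub_mem.mp (hx n)))⟩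

theorem IsPrecomplete.of_smul_top_le [IsPrecomplete I M] (h : J • ⊤ ≤ I • (⊤ : Submodule A M))
    (hclosed : ∀ n, IsHausdorff I (M ⧸ (J ^ n • ⊤ : Submodule A M))) :
    IsPrecomplete J M := by
  refine ⟨fun f hf ↦ ?_⟩
  have hle := pow_smul_top_le_pow_smul_top h
  obtain ⟨L, hL⟩ := IsPrecomplete.prec ‹_› fun {m n} hmn ↦
    SModEq.sub_mem.mpr (hle m (SModEq.sub_mem.mp (hf hmn)))
  refine ⟨L, fun n ↦ ?_⟩
  rw [SModEq, ← Submodule.mkQ_apply, ← Submodule.mkQ_apply]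
  have := hclosed n
  refine (IsHausdorff.eq_iff_smodEq (I := I)).mpr fun k ↦ ?_
  calc (J ^ n • ⊤ : Submodule A M).mkQ (f n)
      = (J ^ n • ⊤ : Submodule A M).mkQ (f (max n k)) :=
        (Submodule.Quotient.eq _).mpr (SModEq.sub_mem.mp (hf (le_max_left n k)))
    _ ≡ (J ^ n • ⊤ : Submodule A M).mkQ L [SMOD (I ^ k • ⊤ : Submodule A _)] :=
        (((hL (max n k)).mono (Submodule.smul_mono_left
          (Ideal.pow_le_pow_right (le_max_right n k)))).map _).mono
          (Submodule.map_le_iff_le_comap.mpr (Submodule.smul_top_le_comap_smul_top _ _))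

end AdicComparison

theorem IsAdicComplete.of_finite {R M : Type u} [CommRing R] [AddCommGroup M] [Module R M]
    [IsNoetherianRing R] (I : Ideal R) [IsAdicComplete I R] [Module.Finite R M] :
    IsAdicComplete I M := by
  rw [← AdicCompletion.of_bijective_iff]
  let e : R ≃ₗ[R] AdicCompletion I R :=
    .ofBijective (AdicCompletion.of I R) (AdicCompletion.of_bijective_iff.mpr ‹_›)
  have : ⇑(AdicCompletion.of I M) =
      AdicCompletion.ofTensorProduct I M ∘ e.rTensor M ∘ (TensorProduct.lid R M).symm :=
    funext fun x ↦ by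
      change _ = AdicCompletion.of I R 1 • AdicCompletion.of I M x
      rw [show AdicCompletion.of I R 1 = 1 from map_one (algebraMap R _), one_smul]
  rw [this]
  exact (AdicCompletion.ofTensorProduct_bijective_of_finite_of_isNoetherian I M).comp
    (e.rTensor M).bijective |>.comp (TensorProduct.lid R M).symm.bijective

theorem IsAdicComplete.of_smul_top_le_of_finite {R M : Type u} {A : Type*} [CommRing R]
    [CommRing A] [Algebra R A] [AddCommGroup M] [Module R M] [Module A M] [IsScalarTower R A M]
    [IsNoetherianRing R] {I : Ideal R} [IsAdicComplete I R] [Module.Finite R M] {J : Ideal A}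
    (h : J • ⊤ ≤ I.map (algebraMap R A) • (⊤ : Submodule A M)) :
    IsAdicComplete J M :=
  have : IsAdicComplete (I.map (algebraMap R A)) M :=
    (IsAdicComplete.map_algebraMap_iff I M).mpr (.of_finite I)
  { toIsHausdorff := .of_smul_top_le h
    toIsPrecomplete := .of_smul_top_le h fun _ ↦ IsHausdorff.map_algebraMap_iff.mpr
      (.of_le_jacobson I _ (IsAdicComplete.le_jacobson_bot I)) }

theorem MonoidAlgebra.ker_lift_one_le_span_of_ofAdd_one_sub_one (k : Type*) [CommRing k] :
    RingHom.ker ((MonoidAlgebra.lift k k (Multiplicative ℤ)) 1).toRingHom ≤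
      Ideal.span {of k _ (Multiplicative.ofAdd 1) - 1} := by
  set S := Ideal.span {of k (Multiplicative ℤ) (Multiplicative.ofAdd 1) - 1}
  have hmk : Ideal.Quotient.mkₐ k S = (Algebra.ofId k _).comp (MonoidAlgebra.lift k k _ 1) := by
    -- a monoid hom out of `Multiplicative ℤ` is determined by the image of `ofAdd 1`
    refine MonoidAlgebra.algHom_ext' (MonoidHom.ext_mint ?_) (by ext)
    simpa using (Ideal.Quotient.eq.mpr (Ideal.mem_span_singleton_self _) :
      Ideal.Quotient.mk S (of k _ (Multiplicative.ofAdd 1)) = Ideal.Quotient.mk S 1)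
  intro f (hf : MonoidAlgebra.lift k k _ 1 f = 0)
  rw [← Ideal.Quotient.eq_zero_iff_mem, ← Ideal.Quotient.mkₐ_eq_mk k, hmk, AlgHom.comp_apply, hf,
    map_zero]

/-- Let `M` be a `ℤ_p[C]`-module, finitely generated as a `ℤ_p`-module.
If `M(t−1) ⊆ pM`, then the natural map `M → M̂_I` to the `I`-adic completion is an
isomorphism. -/
theorem bousfield_stmt13 (p : ℕ) [Fact p.Prime]
    (M : Type) [AddCommGroup M] [Module (MonoidAlgebra ℤ_[p] C) M]
    [Module ℤ_[p] M] [IsScalarTower ℤ_[p] (MonoidAlgebra ℤ_[p] C) M] [Module.Finite ℤ_[p] M]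
    (h : ∀ m : M, ∃ m' : M, (tElt p - 1) • m = (p : ℤ_[p]) • m') :
    Function.Bijective (AdicCompletion.of (augIdeal p) M) := by
  rw [AdicCompletion.of_bijective_iff]
  refine IsAdicComplete.of_smul_top_le_of_finite (I := IsLocalRing.maximalIdeal ℤ_[p]) ?_
  refine Submodule.smul_le.mpr fun r hr m _ ↦ ?_
  obtain ⟨s, rfl⟩ := Ideal.mem_span_singleton'.mp
    (MonoidAlgebra.ker_lift_one_le_span_of_ofAdd_one_sub_one ℤ_[p] hr)
  obtain ⟨m', hm'⟩ := h m
  rw [mul_smul, ← tElt, hm', smul_comm, ← algebraMap_smul (MonoidAlgebra ℤ_[p] C) (p : ℤ_[p])]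
  exact Submodule.smul_mem_smul
    (Ideal.mem_map_of_mem _ ((IsLocalRing.mem_maximalIdeal _).mpr PadicInt.p_nonunit))
    Submodule.mem_top
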